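/- Let n ≥ 2 and let w_0, ..., w_{n-1} be real arc weights on the directed cycle on n vertices such that w = Σ_i w_i ≠ 0 and w^{(2)} = Σ_{0 ≤ i < j ≤ n-1} w_i w_j ≠ 0. Let W be the weighted distance matrix. Then cof(W) = (-1)^{n-1} w^{n-1}, where cof(W) is the sum of all cofactors of W. -/

import Mathlib

/-!
Writing `𝟙` for the all-ones vector, the sum of all cofactors is `𝟙ᵀ adj(W) 𝟙`, and for `U` of
determinant one `𝟙ᵀ adj(W) 𝟙 = 𝟙ᵀ adj(UW) (U 𝟙)` because `adj(UW) = adj(W) adj(U) = adj(W) U⁻¹`.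
Take for `U` the forward difference operator on rows, `(UW)ᵢ = Wᵢ - Wᵢ₊₁` for `i < n - 1`: then
`U 𝟙 = e_{n-1}`, so the cofactor sum is the determinant of `UW` with its last row replaced by `𝟙`.
Along the cycle, `Wᵢ - Wᵢ₊₁ = wᵢ 𝟙 - w eᵢ`, and subtracting `wᵢ` times the last row `𝟙` from row `i`
leaves a triangular matrix with diagonal `(-w, …, -w, 1)`.
-/

open Matrix Finset

namespace Matrix

section Adjugate

variable {n R : Type*} [Fintype n] [DecidableEq n] [CommRing R]

theorem sum_adjugate_eq_one_dotProduct_mulVec_one (A : Matrix n n R) :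
    ∑ i, ∑ j, A.adjugate i j = 1 ⬝ᵥ (A.adjugate *ᵥ 1) := by
  simp [one_dotProduct, mulVec, dotProduct_one]

theorem dotProduct_adjugate_mul_mulVec_mulVec {U : Matrix n n R} (hU : U.det = 1)
    (A : Matrix n n R) (u v : n → R) :
    v ⬝ᵥ ((U * A).adjugate *ᵥ (U *ᵥ u)) = v ⬝ᵥ (A.adjugate *ᵥ u) := by
  rw [adjugate_mul_distrib, mulVec_mulVec, Matrix.mul_assoc, adjugate_mul, hU, one_smul,
    Matrix.mul_one]

theorem dotProduct_adjugate_mulVec_single (A : Matrix n n R) (v : n → R) (k : n) :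
    v ⬝ᵥ (A.adjugate *ᵥ Pi.single k 1) = (A.updateRow k v).det := by
  rw [← cramer_transpose_apply, cramer_eq_adjugate_mulVec, ← adjugate_transpose, mulVec_single_one,
    dotProduct_comm]
  rfl

theorem det_eq_of_row_add_smul {M N : Matrix n n R} {k : n} (c : n → R) (hk : M k = N k)
    (h : ∀ i ≠ k, M i = N i + c i • N k) : M.det = N.det := by
  let c' := Function.update c k 0
  have hM : M = (1 + replicateCol Unit c' * replicateRow Unit (Pi.single k (1 : R))) * N := by
    ext i j
    rw [Matrix.add_mul, Matrix.one_mul, add_apply]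
    by_cases hi : i = k
    · subst hi
      simp [c', hk, mul_apply, Pi.single_apply]
    · simp [c', hi, h i hi, mul_apply, Pi.single_apply]
  rw [hM, det_mul, det_one_add_replicateCol_mul_replicateRow]
  simp [c']

end Adjugate

section FwdDiff

variable (R : Type*) [CommRing R] {m : ℕ}

def fwdDiffMatrix (m : ℕ) : Matrix (Fin (m + 1)) (Fin (m + 1)) R :=
  1 - of fun (i j : Fin (m + 1)) => if (j : ℕ) = i + 1 then (1 : R) else 0

variable {R}

theorem fwdDiffMatrix_mulVec_castSucc (v : Fin (m + 1) → R) (k : Fin m) :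
    (fwdDiffMatrix R m *ᵥ v) k.castSucc = v k.castSucc - v k.succ := by
  have : ∀ x : Fin (m + 1), (x : ℕ) = k + 1 ↔ x = k.succ := by simp [Fin.ext_iff]
  rw [fwdDiffMatrix, sub_mulVec, one_mulVec, Pi.sub_apply]
  simp [mulVec, dotProduct, this]

theorem fwdDiffMatrix_mulVec_last (v : Fin (m + 1) → R) :
    (fwdDiffMatrix R m *ᵥ v) (Fin.last m) = v (Fin.last m) := by
  have : ∀ x : Fin (m + 1), (x : ℕ) ≠ m + 1 := fun x => x.isLt.ne
  rw [fwdDiffMatrix, sub_mulVec, one_mulVec, Pi.sub_apply]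
  simp [mulVec, dotProduct, this]

theorem fwdDiffMatrix_mulVec_one :
    fwdDiffMatrix R m *ᵥ 1 = Pi.single (Fin.last m) 1 := by
  ext i
  induction i using Fin.lastCases with
  | last => simp [fwdDiffMatrix_mulVec_last]
  | cast k => simp [fwdDiffMatrix_mulVec_castSucc, Fin.castSucc_ne_last]

theorem fwdDiffMatrix_mul_apply_castSucc (A : Matrix (Fin (m + 1)) (Fin (m + 1)) R) (k : Fin m)
    (j : Fin (m + 1)) :
    (fwdDiffMatrix R m * A) k.castSucc j = A k.castSucc j - A k.succ j :=
  fwdDiffMatrix_mulVec_castSucc (fun r => A r j) k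

theorem det_fwdDiffMatrix : (fwdDiffMatrix R m).det = 1 := by
  rw [det_of_isUpperTriangular]
  · simp [fwdDiffMatrix]
  · intro i j (hji : j < i)
    have : (j : ℕ) ≠ i + 1 := by omega
    simp [fwdDiffMatrix, one_apply_ne hji.ne', this]

end FwdDiff

end Matrix

section Cycle

variable {M : Type*} [AddCommMonoid M]

theorem Fin.sum_range_succ_add_ofNat {n : ℕ} [NeZero n] (f : Fin n → M) (i : Fin n) (d : ℕ) :
    ∑ k ∈ range (d + 1), f (i + Fin.ofNat n k) =
      f i + ∑ k ∈ range d, f (i + 1 + Fin.ofNat n k) := by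
  have hsucc (k : ℕ) : Fin.ofNat n (k + 1) = 1 + Fin.ofNat n k := by
    ext
    simp [Fin.val_add, Nat.add_mod, Nat.add_comm]
  rw [sum_range_succ', add_comm]
  congr 1
  · simp
  · exact sum_congr rfl fun k _ => by rw [hsucc, add_assoc]

theorem Fin.sum_range_add_ofNat {n : ℕ} [NeZero n] (f : Fin n → M) (i : Fin n) :
    ∑ k ∈ range n, f (i + Fin.ofNat n k) = ∑ x, f x := by
  rw [← Fin.sum_univ_eq_sum_range (fun k => f (i + Fin.ofNat n k))]
  simpa [Fin.ofNat_eq_cast] using Equiv.sum_comp (Equiv.addLeft i) f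

def cycleDistMatrix {n : ℕ} [NeZero n] (w : Fin n → M) : Matrix (Fin n) (Fin n) M :=
  of fun i j => ∑ k ∈ range ((j - i : Fin n) : ℕ), w (i + Fin.ofNat n k)

theorem cycleDistMatrix_sub_apply_add_one {G : Type*} [AddCommGroup G] {m : ℕ}
    (w : Fin (m + 1) → G) (i j : Fin (m + 1)) :
    cycleDistMatrix w i j - cycleDistMatrix w (i + 1) j =
      w i - if j = i then ∑ x, w x else 0 := by
  have hfull := Fin.sum_range_succ_add_ofNat w i
  simp only [cycleDistMatrix, of_apply, ← sub_sub, Fin.coe_sub_one, sub_eq_zero]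
  split_ifs with hji
  · subst hji
    rw [sub_self, Fin.val_zero, sum_range_zero, ← Fin.sum_range_add_ofNat w j, hfull]
    abel
  · obtain ⟨d, hd⟩ : ∃ d, ((j - i : Fin (m + 1)) : ℕ) = d + 1 :=
      Nat.exists_eq_succ_of_ne_zero (by simpa [Fin.ext_iff, sub_eq_zero] using hji)
    rw [hd, hfull, Nat.add_sub_cancel]
    abel

theorem det_fwdDiffMatrix_mul_cycleDistMatrix_updateRow_last {R : Type*} [CommRing R] {m : ℕ}
    (w : Fin (m + 1) → R) :
    ((fwdDiffMatrix R m * cycleDistMatrix w).updateRow (Fin.last m) 1).det = (-∑ x, w x) ^ m := by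
  set s := ∑ x, w x
  let T : Matrix (Fin (m + 1)) (Fin (m + 1)) R :=
    of fun i j => if i = Fin.last m then 1 else if j = i then -s else 0
  have hT : T.det = (-s) ^ m := by
    rw [det_of_isLowerTriangular _ fun i j (hij : i < j) => by
      simp [T, hij.ne', (hij.trans_le (Fin.le_last j)).ne]]
    simp [T, Fin.prod_univ_castSucc, Fin.castSucc_ne_last]
  rw [← hT]
  refine det_eq_of_row_add_smul (k := Fin.last m) w (by ext; simp [T]) fun i hi => ?_
  obtain ⟨k, rfl⟩ := Fin.exists_castSucc_eq.mpr hi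
  ext j
  rw [updateRow_ne hi, fwdDiffMatrix_mul_apply_castSucc, ← Fin.coeSucc_eq_succ,
    cycleDistMatrix_sub_apply_add_one]
  by_cases hj : j = k.castSucc <;> simp [T, hj, Fin.castSucc_ne_last, s, sub_eq_neg_add]

end Cycle

theorem stmt_13_general {n : ℕ} [NeZero n] (w : Fin n → ℝ)
    (W : Matrix (Fin n) (Fin n) ℝ)
    (hW : W = Matrix.of fun i j => ∑ k ∈ Finset.range ((j - i : Fin n) : ℕ), w (i + (Fin.ofNat n k))) :
    (∑ i, ∑ j, W.adjugate i j) = (-1 : ℝ) ^ (n - 1) * (∑ i, w i) ^ (n - 1) := by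
  obtain ⟨m, rfl⟩ : ∃ m, n = m + 1 := Nat.exists_eq_succ_of_ne_zero (NeZero.ne n)
  obtain rfl : W = cycleDistMatrix w := hW
  rw [sum_adjugate_eq_one_dotProduct_mulVec_one,
    ← dotProduct_adjugate_mul_mulVec_mulVec det_fwdDiffMatrix, fwdDiffMatrix_mulVec_one,
    dotProduct_adjugate_mulVec_single, det_fwdDiffMatrix_mul_cycleDistMatrix_updateRow_last,
    Nat.add_sub_cancel, neg_pow]

theorem stmt_13 {n : ℕ} [NeZero n] (hn : 2 ≤ n) (w : Fin n → ℝ)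
    (hw : (∑ i, w i) ≠ 0)
    (hw2 : (∑ i, ∑ j ∈ Finset.Ioi i, w i * w j) ≠ 0)
    (W : Matrix (Fin n) (Fin n) ℝ)
    (hW : W = Matrix.of fun i j => ∑ k ∈ Finset.range ((j - i : Fin n) : ℕ), w (i + (Fin.ofNat n k))) :
    (∑ i, ∑ j, W.adjugate i j) = (-1 : ℝ) ^ (n - 1) * (∑ i, w i) ^ (n - 1) :=
  stmt_13_general w W hW
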